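/- Let B be an invertible symmetric real d×d matrix and let w ∈ ℝ^d satisfy (w,w) = wᵀBw > 0. Then the Gaussian Φ(x) = exp(−π·(w,x)²/(w,w)) satisfies Vignéras' equation with λ = −1: V_{−1} Φ = 0 on all of ℝ^d. -/

import Mathlib

/-!
Writing `c = B w`, the Gaussian is the ridge function `Φ(x) = F(c ⬝ x)` with
`F(t) = exp(-π t² / Q)`, `Q = (w,w)`. On any ridge function the Vignéras operator reduces to an
ordinary differential operator in `t = c ⬝ x`,
`V_λ (F ∘ (c ⬝ ·)) = (cᵀ B⁻¹ c) F'' + 2π (t F' - λ F)`,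
and `cᵀ B⁻¹ c = wᵀ B B⁻¹ B w = Q`. The claim is then the one-variable identity
`Q F'' + 2π t F' + 2π F = 0`, which holds because `F' = -(2π t / Q) F`.
-/

noncomputable def pd {d : ℕ} (i : Fin d) (f : (Fin d → ℝ) → ℂ) : (Fin d → ℝ) → ℂ :=
  fun x => fderiv ℝ f x (Pi.single i 1)

noncomputable def Vop {d : ℕ} (B : Matrix (Fin d) (Fin d) ℝ) (lam : ℝ)
    (f : (Fin d → ℝ) → ℂ) : (Fin d → ℝ) → ℂ :=
  fun x =>
    (∑ i, ∑ j, ((B⁻¹ i j : ℝ) : ℂ) * pd i (pd j f) x)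
      + 2 * (Real.pi : ℂ) * ((∑ i, (x i : ℂ) * pd i f x) - (lam : ℂ) * f x)

open Matrix Real

theorem hasFDerivAt_dotProduct {𝕜 ι : Type*} [NontriviallyNormedField 𝕜] [CompleteSpace 𝕜]
    [Fintype ι] [DecidableEq ι] (c y : ι → 𝕜) :
    HasFDerivAt (c ⬝ᵥ ·) (LinearMap.toContinuousLinearMap (dotProductEquiv 𝕜 ι c)) y :=
  (LinearMap.toContinuousLinearMap (dotProductEquiv 𝕜 ι c)).hasFDerivAt

theorem sum_sum_mul_mul_eq_vecMul_dotProduct {R m n : Type*} [NonUnitalCommSemiring R]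
    [Fintype m] [Fintype n] (v : m → R) (A : Matrix m n R) (y : n → R) :
    ∑ i, ∑ j, v i * A i j * y j = (v ᵥ* A) ⬝ᵥ y := by
  simp only [dotProduct, vecMul, Finset.sum_mul]
  exact Finset.sum_comm

theorem inv_mulVec_vecMul_of_isSymm {R n : Type*} [CommRing R] [Fintype n] [DecidableEq n]
    {B : Matrix n n R} (hsymm : B.IsSymm) (hinv : IsUnit B.det) (w : n → R) :
    B⁻¹ *ᵥ (w ᵥ* B) = w := by
  rw [← mulVec_transpose, hsymm.eq, mulVec_mulVec, nonsing_inv_mul B hinv, one_mulVec]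

section RidgeFunctions

variable {d : ℕ} {F F' F'' : ℝ → ℂ}

theorem pd_comp_dotProduct (hF : ∀ t, HasDerivAt F (F' t) t) (c : Fin d → ℝ) (i : Fin d) :
    pd i (fun y => F (c ⬝ᵥ y)) = fun y => c i * F' (c ⬝ᵥ y) := by
  funext y
  rw [pd, HasFDerivAt.fderiv (f := fun y => F (c ⬝ᵥ y))
    ((hF _).hasFDerivAt.comp y (hasFDerivAt_dotProduct c y))]
  simp [mul_comm]

theorem Vop_comp_dotProduct (hF : ∀ t, HasDerivAt F (F' t) t)
    (hF' : ∀ t, HasDerivAt F' (F'' t) t) (B : Matrix (Fin d) (Fin d) ℝ) (lam : ℝ)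
    (c x : Fin d → ℝ) :
    Vop B lam (fun y => F (c ⬝ᵥ y)) x =
      (c ⬝ᵥ (B⁻¹ *ᵥ c) : ℝ) * F'' (c ⬝ᵥ x)
        + 2 * π * ((c ⬝ᵥ x : ℝ) * F' (c ⬝ᵥ x) - lam * F (c ⬝ᵥ x)) := by
  have hF'c (j : Fin d) : ∀ t, HasDerivAt (fun t => (c j : ℂ) * F' t) (c j * F'' t) t :=
    fun t => (hF' t).const_mul _
  have hquad : ∑ i, ∑ j, (B⁻¹ i j : ℂ) * (c i * (c j * F'' (c ⬝ᵥ x)))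
      = (c ⬝ᵥ (B⁻¹ *ᵥ c) : ℝ) * F'' (c ⬝ᵥ x) := by
    generalize F'' (c ⬝ᵥ x) = z
    simp only [dotProduct, mulVec]
    push_cast
    simp only [Finset.mul_sum, Finset.sum_mul]
    exact Finset.sum_congr rfl fun i _ => Finset.sum_congr rfl fun j _ => by ring
  have heuler : ∑ i, (x i : ℂ) * (c i * F' (c ⬝ᵥ x)) = (c ⬝ᵥ x : ℝ) * F' (c ⬝ᵥ x) := by
    generalize F' (c ⬝ᵥ x) = z
    simp only [dotProduct]
    push_cast
    rw [Finset.sum_mul]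
    exact Finset.sum_congr rfl fun i _ => by ring
  simp only [Vop, pd_comp_dotProduct hF, pd_comp_dotProduct (hF'c _), hquad, heuler]

end RidgeFunctions

theorem hasDerivAt_neg_pi_sq_div (Q t : ℝ) :
    HasDerivAt (fun s => -(π * s ^ 2 / Q)) (-(2 * π * t / Q)) t :=
  (((hasDerivAt_pow 2 t).const_mul π).div_const Q).neg.congr_deriv (by ring)

theorem hasDerivAt_exp_neg_pi_sq_div (Q t : ℝ) :
    HasDerivAt (fun s => exp (-(π * s ^ 2 / Q))) (-(2 * π * t / Q) * exp (-(π * t ^ 2 / Q))) t :=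
  (hasDerivAt_neg_pi_sq_div Q t).exp.congr_deriv (mul_comm _ _)

theorem hasDerivAt_deriv_exp_neg_pi_sq_div (Q t : ℝ) :
    HasDerivAt (fun s => -(2 * π * s / Q) * exp (-(π * s ^ 2 / Q)))
      (((2 * π * t / Q) ^ 2 - 2 * π / Q) * exp (-(π * t ^ 2 / Q))) t := by
  have hlin : HasDerivAt (fun s => -(2 * π * s / Q)) (-(2 * π / Q)) t :=
    (((hasDerivAt_id t).const_mul (2 * π)).div_const Q).neg.congr_deriv (by simp)
  exact (hlin.mul (hasDerivAt_exp_neg_pi_sq_div Q t)).congr_deriv (by ring)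

theorem exp_neg_pi_sq_div_ode {Q : ℝ} (hQ : Q ≠ 0) (t : ℝ) :
    Q * (((2 * π * t / Q) ^ 2 - 2 * π / Q) * exp (-(π * t ^ 2 / Q)))
      + 2 * π * (t * (-(2 * π * t / Q) * exp (-(π * t ^ 2 / Q))) + exp (-(π * t ^ 2 / Q))) = 0 := by
  field_simp
  ring

theorem gaussian_solves_vigneras_general {d : ℕ} (B : Matrix (Fin d) (Fin d) ℝ)
    (hsymm : B.IsSymm) (hinv : IsUnit B.det) (w : Fin d → ℝ)
    (hw : 0 < ∑ i, ∑ j, w i * B i j * w j) :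
    ∀ x : Fin d → ℝ,
      Vop B (-1) (fun y => (Complex.ofReal
        (Real.exp (-(Real.pi * (∑ i, ∑ j, w i * B i j * y j) ^ 2 /
          (∑ i, ∑ j, w i * B i j * w j)))))) x = 0 := by
  intro x
  set Q := ∑ i, ∑ j, w i * B i j * w j with hQ
  simp only [sum_sum_mul_mul_eq_vecMul_dotProduct w B]
  rw [Vop_comp_dotProduct (F := fun t => (exp (-(π * t ^ 2 / Q)) : ℂ))
      (fun t => (hasDerivAt_exp_neg_pi_sq_div Q t).ofReal_comp)
      (fun t => (hasDerivAt_deriv_exp_neg_pi_sq_div Q t).ofReal_comp),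
    inv_mulVec_vecMul_of_isSymm hsymm hinv, ← sum_sum_mul_mul_eq_vecMul_dotProduct w B w, ← hQ]
  rw [Complex.ofReal_neg, Complex.ofReal_one, neg_one_mul, sub_neg_eq_add]
  exact_mod_cast exp_neg_pi_sq_div_ode hw.ne' _

/-- for invertible symmetric `B` and `w` with `(w,w) = wᵀBw > 0`, the
Gaussian `Φ(x) = exp(−π (w,x)²/(w,w))` satisfies Vignéras' equation with `λ = −1`. -/
theorem gaussian_solves_vigneras {d : ℕ} (hd : 1 ≤ d) (B : Matrix (Fin d) (Fin d) ℝ)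
    (hsymm : B.IsSymm) (hinv : IsUnit B.det) (w : Fin d → ℝ)
    (hw : 0 < ∑ i, ∑ j, w i * B i j * w j) :
    ∀ x : Fin d → ℝ,
      Vop B (-1) (fun y => (Complex.ofReal
        (Real.exp (-(Real.pi * (∑ i, ∑ j, w i * B i j * y j) ^ 2 /
          (∑ i, ∑ j, w i * B i j * w j)))))) x = 0 :=
  gaussian_solves_vigneras_general B hsymm hinv w hw
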